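/- In the winner-bid auction with valuations v_l < v_h, the set of efficient Nash equilibrium payoff vectors equals {(v_l/2 + ES − t, v_h/2 + t) : t ∈ {0,1,...,ES}} where ES = (v_h − v_l)/2, i.e., exactly the integer divisions of the equity surplus. -/

import Mathlib

open Finset Filter

/-- Utility in the winner-bid auction for an agent with value `v` bidding `b`
when the opponent bids `c`: the higher bidder wins the object and pays their own
bid to the other agent; ties are broken uniformly at random. -/
noncomputable def util (v b c : ℕ) : ℝ :=
  if c < b then (v : ℝ) - b
  else if b < c then (c : ℝ)
  else (((v : ℝ) - b) + b) / 2

/-- Expected utility of bidding `b` against the mixed strategy `σ` of the opponent. -/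
noncomputable def eu (pbar v : ℕ) (σ : ℕ → ℝ) (b : ℕ) : ℝ :=
  ∑ c ∈ range (pbar + 1), σ c * util v b c

/-- A mixed strategy on the bid space `{0,...,pbar}`. -/
def IsStrategy (pbar : ℕ) (σ : ℕ → ℝ) : Prop :=
  (∀ b, 0 ≤ σ b) ∧ (∑ b ∈ range (pbar + 1), σ b = 1) ∧ ∀ b, pbar < b → σ b = 0

/-- Nash equilibrium of the winner-bid auction with valuations `vl` (agent l) and
`vh` (agent h). -/
def IsNash (pbar vl vh : ℕ) (σl σh : ℕ → ℝ) : Prop :=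
  IsStrategy pbar σl ∧ IsStrategy pbar σh ∧
  (∀ b ∈ range (pbar + 1), 0 < σl b →
    ∀ b' ∈ range (pbar + 1), eu pbar vl σh b' ≤ eu pbar vl σh b) ∧
  (∀ b ∈ range (pbar + 1), 0 < σh b →
    ∀ b' ∈ range (pbar + 1), eu pbar vh σl b' ≤ eu pbar vh σl b)

/-- Expected payoff of the agent with value `v` playing `σown` against `σopp`. -/
noncomputable def payoff (pbar v : ℕ) (σown σopp : ℕ → ℝ) : ℝ :=
  ∑ b ∈ range (pbar + 1), σown b * eu pbar v σopp b

/-- Probability that the agent playing `σown` receives the object. -/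
noncomputable def winProb (pbar : ℕ) (σown σopp : ℕ → ℝ) : ℝ :=
  ∑ b ∈ range (pbar + 1), ∑ c ∈ range (pbar + 1),
    σown b * σopp c * (if c < b then 1 else if b < c then 0 else 1 / 2)

/-- An equilibrium is efficient if the higher-valuation agent (playing `σh`)
receives the object with probability one, i.e., the lower-valuation agent
receives it with probability zero. -/
def Efficient (pbar : ℕ) (σl σh : ℕ → ℝ) : Prop := winProb pbar σl σh = 0

/-- The pure strategy bidding `b`. -/
noncomputable def pureS (b : ℕ) : ℕ → ℝ := fun c => if c = b then 1 else 0

/-- Weak payoff monotonicity for the agent with value `v` playing `σown` against `σopp`. -/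
def WPMon (pbar v : ℕ) (σown σopp : ℕ → ℝ) : Prop :=
  ∀ m ∈ range (pbar + 1), ∀ n ∈ range (pbar + 1),
    σown n < σown m → eu pbar v σopp n < eu pbar v σopp m

/-- (Full) payoff monotonicity for the agent with value `v`. -/
def PMon (pbar v : ℕ) (σown σopp : ℕ → ℝ) : Prop :=
  ∀ m ∈ range (pbar + 1), ∀ n ∈ range (pbar + 1),
    (eu pbar v σopp n ≤ eu pbar v σopp m ↔ σown n ≤ σown m)

/-- Empirical equilibrium: a Nash equilibrium that is the pointwise limit of a
sequence of weakly payoff monotone strategy profiles. -/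
def IsEmpirical (pbar vl vh : ℕ) (σl σh : ℕ → ℝ) : Prop :=
  IsNash pbar vl vh σl σh ∧
  ∃ s : ℕ → (ℕ → ℝ) × (ℕ → ℝ),
    (∀ n, IsStrategy pbar (s n).1 ∧ IsStrategy pbar (s n).2 ∧
      WPMon pbar vl (s n).1 (s n).2 ∧ WPMon pbar vh (s n).2 (s n).1) ∧
    ∀ b, Tendsto (fun n => (s n).1 b) atTop (nhds (σl b)) ∧
         Tendsto (fun n => (s n).2 b) atTop (nhds (σh b))

/-!
Efficiency forces every bid of `l` below every bid of `h`, so each bid `b` in the support of `h`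
earns `v_h - b`; indifference across the support makes `h` bid a single `p`. Then `l` bids
below `p`, so it earns `p`, and matching `p` must not pay: `v_l ≤ 2p`. Bidding `p - 1` ties or
wins against `l`, and must not pay for `h`: `2p ≤ v_h + 1`, hence `2p ≤ v_h` by parity.
Conversely the pure profile `(p - 1, p)` with `v_l ≤ 2p ≤ v_h` is an efficient equilibrium.
The payoffs are `(p, v_h - p)`, that is `t = v_h / 2 - p`.
-/

section Strategy

variable {pbar : ℕ} {σ : ℕ → ℝ}

lemma IsStrategy.le_of_pos (hσ : IsStrategy pbar σ) {b : ℕ} (hb : 0 < σ b) : b ≤ pbar :=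
  not_lt.1 fun h => hb.ne' (hσ.2.2 b h)

lemma IsStrategy.mem_range_of_pos (hσ : IsStrategy pbar σ) {b : ℕ} (hb : 0 < σ b) :
    b ∈ range (pbar + 1) :=
  mem_range.2 (Nat.lt_succ_of_le (hσ.le_of_pos hb))

lemma IsStrategy.exists_pos (hσ : IsStrategy pbar σ) : ∃ b, 0 < σ b := by
  by_contra! h
  have hsum : ∑ b ∈ range (pbar + 1), σ b = 0 :=
    sum_eq_zero fun b _ => le_antisymm (h b) (hσ.1 b)
  simp [hσ.2.1] at hsum

lemma IsStrategy.eq_pureS (hσ : IsStrategy pbar σ) {p : ℕ} (h : ∀ x, 0 < σ x → x = p) :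
    σ = pureS p := by
  have hzero : ∀ x, x ≠ p → σ x = 0 := fun x hx =>
    ((hσ.1 x).eq_or_lt.resolve_right fun hpos => hx (h x hpos)).symm
  obtain ⟨b, hb⟩ := hσ.exists_pos
  obtain rfl := h b hb
  have hone : σ b = 1 := by
    rw [← hσ.2.1, sum_eq_single_of_mem b (hσ.mem_range_of_pos hb) fun x _ hx => hzero x hx]
  funext x
  by_cases hx : x = b
  · simp [pureS, hx, hone]
  · simp [pureS, hx, hzero x hx]

lemma eq_of_pureS_pos {b c : ℕ} (h : 0 < pureS c b) : b = c := by
  by_contra hne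
  simp [pureS, hne] at h

lemma sum_pureS_mul {c : ℕ} (hc : c ≤ pbar) (f : ℕ → ℝ) :
    ∑ b ∈ range (pbar + 1), pureS c b * f b = f c := by
  simp [pureS, Nat.lt_succ_of_le hc]

lemma isStrategy_pureS {c : ℕ} (hc : c ≤ pbar) : IsStrategy pbar (pureS c) := by
  refine ⟨fun b => ?_, by simpa using sum_pureS_mul hc fun _ => 1, fun b hb => ?_⟩
  · unfold pureS; split_ifs <;> norm_num
  · simp [pureS, (hc.trans_lt hb).ne']

end Strategy

section Utility

variable {pbar v : ℕ}

lemma util_of_gt {b c : ℕ} (h : c < b) : util v b c = v - b := if_pos h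

lemma util_of_lt {b c : ℕ} (h : b < c) : util v b c = c := by
  simp [util, h, h.not_gt]

lemma util_self (b : ℕ) : util v b b = v / 2 := by
  simp [util]

lemma eu_pureS {b c : ℕ} (hc : c ≤ pbar) : eu pbar v (pureS c) b = util v b c :=
  sum_pureS_mul hc _

lemma payoff_pureS {b : ℕ} (hb : b ≤ pbar) (τ : ℕ → ℝ) :
    payoff pbar v (pureS b) τ = eu pbar v τ b :=
  sum_pureS_mul hb _

lemma eu_of_support_le {σ : ℕ → ℝ} (hσ : IsStrategy pbar σ) {b : ℕ} (hb : b ≤ pbar)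
    (h : ∀ x, 0 < σ x → x ≤ b) :
    eu pbar v σ b = σ b * (v / 2) + (1 - σ b) * (v - b) := by
  have hterm : ∀ x ∈ range (pbar + 1),
      σ x * util v b x = σ x * (v - b) + if b = x then σ x * (b - v / 2) else 0 := by
    intro x _
    rcases (hσ.1 x).eq_or_lt with h0 | hpos
    · simp [← h0]
    · rcases (h x hpos).lt_or_eq with hlt | rfl
      · simp [util_of_gt hlt, hlt.ne']
      · simp only [util_self, if_true]
        ring
  rw [eu, sum_congr rfl hterm, sum_add_distrib, ← sum_mul, hσ.2.1,
    sum_ite_eq, if_pos (mem_range.2 (Nat.lt_succ_of_le hb))]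
  ring

lemma eu_of_support_lt {σ : ℕ → ℝ} (hσ : IsStrategy pbar σ) {b : ℕ} (hb : b ≤ pbar)
    (h : ∀ x, 0 < σ x → x < b) : eu pbar v σ b = v - b := by
  have hb0 : σ b = 0 := le_antisymm (not_lt.1 fun hpos => (h b hpos).false) (hσ.1 b)
  rw [eu_of_support_le hσ hb fun x hx => (h x hx).le, hb0]
  ring

lemma payoff_eq_of_eu_eq {σ τ : ℕ → ℝ} (hσ : IsStrategy pbar σ) {u : ℝ}
    (h : ∀ b, 0 < σ b → eu pbar v τ b = u) : payoff pbar v σ τ = u := by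
  have hterm : ∀ b ∈ range (pbar + 1), σ b * eu pbar v τ b = σ b * u := fun b _ => by
    rcases (hσ.1 b).eq_or_lt with h0 | hpos
    · simp [← h0]
    · rw [h b hpos]
  rw [payoff, sum_congr rfl hterm, ← sum_mul, hσ.2.1, one_mul]

end Utility

section Equilibrium

variable {pbar vl vh : ℕ} {σl σh : ℕ → ℝ}

lemma Efficient.lt_of_pos (hl : IsStrategy pbar σl) (hh : IsStrategy pbar σh)
    (hE : Efficient pbar σl σh) {b c : ℕ} (hb : 0 < σl b) (hc : 0 < σh c) : b < c := by
  set w : ℕ → ℕ → ℝ := fun b c => if c < b then 1 else if b < c then 0 else 1 / 2 with hw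
  have hnn : ∀ b c, 0 ≤ σl b * σh c * w b c := fun b c =>
    mul_nonneg (mul_nonneg (hl.1 b) (hh.1 c)) (by simp only [hw]; split_ifs <;> norm_num)
  have hrow := (sum_eq_zero_iff_of_nonneg fun b _ => sum_nonneg fun c _ => hnn b c).1 hE b
    (hl.mem_range_of_pos hb)
  have hterm := (sum_eq_zero_iff_of_nonneg fun c _ => hnn b c).1 hrow c (hh.mem_range_of_pos hc)
  by_contra! hcb
  have hw_pos : 0 < w b c := by
    rcases hcb.lt_or_eq with h | rfl
    · simp [hw, h]
    · simp [hw]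
  exact (mul_pos (mul_pos hb hc) hw_pos).ne' hterm

lemma efficient_pureS {b c : ℕ} (hbc : b < c) (hc : c ≤ pbar) :
    Efficient pbar (pureS b) (pureS c) := by
  simp only [Efficient, winProb, mul_assoc, ← mul_sum]
  rw [sum_pureS_mul (hbc.le.trans hc), sum_pureS_mul hc, if_neg hbc.not_gt, if_pos hbc]

lemma isNash_pureS_pureS_succ {q : ℕ} (hq : q + 1 ≤ pbar) (hl : vl ≤ 2 * (q + 1))
    (hh : 2 * (q + 1) ≤ vh) : IsNash pbar vl vh (pureS q) (pureS (q + 1)) := by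
  have hl' : (vl : ℝ) ≤ 2 * (q + 1) := by exact_mod_cast hl
  have hh' : 2 * ((q : ℝ) + 1) ≤ vh := by exact_mod_cast hh
  refine ⟨isStrategy_pureS (by omega), isStrategy_pureS hq, ?_, ?_⟩
  · rintro b - hb b' -
    obtain rfl := eq_of_pureS_pos hb
    rw [eu_pureS hq, eu_pureS hq, util_of_lt (Nat.lt_succ_self b)]
    rcases lt_trichotomy b' (b + 1) with h | rfl | h
    · rw [util_of_lt h]
    · rw [util_self]; push_cast; linarith
    · have h' : (b : ℝ) + 1 < b' := by exact_mod_cast h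
      rw [util_of_gt h]; push_cast; linarith
  · rintro b - hb b' -
    obtain rfl := eq_of_pureS_pos hb
    rw [eu_pureS (by omega), eu_pureS (by omega), util_of_gt (Nat.lt_succ_self q)]
    push_cast
    rcases lt_trichotomy b' q with h | rfl | h
    · have h' : (b' : ℝ) < q := by exact_mod_cast h
      rw [util_of_lt h]; linarith
    · rw [util_self]; linarith
    · have h' : (q : ℝ) + 1 ≤ b' := by exact_mod_cast h
      rw [util_of_gt h]; linarith

lemma IsNash.exists_eq_pureS_of_efficient (hN : IsNash pbar vl vh σl σh)
    (hE : Efficient pbar σl σh) : ∃ p, σh = pureS p := by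
  obtain ⟨hl, hh, -, hNh⟩ := hN
  have heu : ∀ x, 0 < σh x → eu pbar vh σl x = vh - x := fun x hx =>
    eu_of_support_lt hl (hh.le_of_pos hx) fun y hy => hE.lt_of_pos hl hh hy hx
  obtain ⟨p, hp⟩ := hh.exists_pos
  refine ⟨p, hh.eq_pureS fun x hx => ?_⟩
  have h₁ := hNh p (hh.mem_range_of_pos hp) hp x (hh.mem_range_of_pos hx)
  have h₂ := hNh x (hh.mem_range_of_pos hx) hx p (hh.mem_range_of_pos hp)
  rw [heu x hx, heu p hp] at h₁ h₂
  exact_mod_cast (by linarith : (x : ℝ) = p)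

lemma IsNash.exists_payoffs_of_efficient (hN : IsNash pbar vl vh σl σh)
    (hE : Efficient pbar σl σh) :
    ∃ p : ℕ, vl ≤ 2 * p ∧ 2 * p ≤ vh + 1 ∧
      payoff pbar vl σl σh = p ∧ payoff pbar vh σh σl = vh - p := by
  obtain ⟨p, rfl⟩ := hN.exists_eq_pureS_of_efficient hE
  obtain ⟨hl, hh, hNl, hNh⟩ := hN
  have hp : 0 < pureS p p := by simp [pureS]
  have hpbar : p ≤ pbar := hh.le_of_pos hp
  have hp_mem : p ∈ range (pbar + 1) := hh.mem_range_of_pos hp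
  have hsupp : ∀ b, 0 < σl b → b < p := fun b hb => hE.lt_of_pos hl hh hb hp
  have heu_l : ∀ b, 0 < σl b → eu pbar vl (pureS p) b = p := fun b hb => by
    rw [eu_pureS hpbar, util_of_lt (hsupp b hb)]
  have heu_h : eu pbar vh σl p = vh - p := eu_of_support_lt hl hpbar hsupp
  obtain ⟨b₀, hb₀⟩ := hl.exists_pos
  obtain ⟨q, rfl⟩ : ∃ q, p = q + 1 := Nat.exists_eq_add_one_of_ne_zero (hsupp b₀ hb₀).ne_bot
  have htie : (vl : ℝ) / 2 ≤ q + 1 := by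
    have h := hNl b₀ (hl.mem_range_of_pos hb₀) hb₀ (q + 1) hp_mem
    rwa [heu_l b₀ hb₀, eu_pureS hpbar, util_self, Nat.cast_succ] at h
  -- `h` bidding `q` ties with `l` with probability `σl q` and otherwise wins
  have hundercut : 2 * (q : ℝ) < vh := by
    have h := hNh (q + 1) hp_mem hp q (mem_range.2 (by omega))
    rw [heu_h, eu_of_support_le hl (by omega) fun x hx => Nat.lt_succ_iff.1 (hsupp x hx)] at h
    push_cast at h
    by_contra! hq
    nlinarith [mul_nonneg (hl.1 q) (by linarith : (0 : ℝ) ≤ q - vh / 2)]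
  have hvl : vl ≤ 2 * (q + 1) := by exact_mod_cast (by linarith : (vl : ℝ) ≤ 2 * (q + 1))
  have hvh : 2 * q < vh := by exact_mod_cast hundercut
  exact ⟨q + 1, hvl, by omega, payoff_eq_of_eu_eq hl heu_l,
    payoff_eq_of_eu_eq hh fun b hb => by rw [eq_of_pureS_pos hb, heu_h]⟩

end Equilibrium

theorem stmt7 (vl vh pbar : ℕ) (hvl : 4 ≤ vl) (hevl : Even vl) (hevh : Even vh)
    (hlt : vl < vh) (hpbar : vh / 2 + 2 ≤ pbar) :
    ∀ πl πh : ℝ,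
      (∃ σl σh : ℕ → ℝ, IsNash pbar vl vh σl σh ∧ Efficient pbar σl σh ∧
        payoff pbar vl σl σh = πl ∧ payoff pbar vh σh σl = πh) ↔
      ∃ t ≤ (vh - vl) / 2,
        πl = ((vl / 2 + ((vh - vl) / 2 - t) : ℕ) : ℝ) ∧ πh = ((vh / 2 + t : ℕ) : ℝ) := by
  intro πl πh
  obtain ⟨a, rfl⟩ := hevl
  obtain ⟨c, rfl⟩ := hevh
  constructor
  · rintro ⟨σl, σh, hN, hE, rfl, rfl⟩
    obtain ⟨p, hap, hpc, hpl, hph⟩ := hN.exists_payoffs_of_efficient hE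
    refine ⟨c - p, by omega, ?_, ?_⟩
    · rw [hpl, show (a + a) / 2 + ((c + c - (a + a)) / 2 - (c - p)) = p by omega]
    · rw [hph, show (c + c) / 2 + (c - p) = c + c - p by omega, Nat.cast_sub (by omega)]
  · rintro ⟨t, ht, rfl, rfl⟩
    obtain ⟨q, hq⟩ : ∃ q, c - t = q + 1 := ⟨c - t - 1, by omega⟩
    refine ⟨pureS q, pureS (q + 1), isNash_pureS_pureS_succ (by omega) (by omega) (by omega),
      efficient_pureS (Nat.lt_succ_self q) (by omega), ?_, ?_⟩
    · rw [payoff_pureS (by omega), eu_pureS (by omega), util_of_lt (Nat.lt_succ_self q),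
        show (a + a) / 2 + ((c + c - (a + a)) / 2 - t) = q + 1 by omega]
    · rw [payoff_pureS (by omega), eu_pureS (by omega), util_of_gt (Nat.lt_succ_self q),
        show (c + c) / 2 + t = c + c - (q + 1) by omega, Nat.cast_sub (by omega)]
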